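/- Fix an integer n ≥ 2 and set b := -n + i. Let D ⊆ {0, 1, …, n²} be such that Δ := D − D is sparse. Let k ≥ 1 and let (δ_1, …, δ_k) and (δ'_1, …, δ'_k) be tuples with all δ_j, δ'_j ∈ Δ such that δ_j ≠ δ'_j for some index 1 ≤ j ≤ k. Then the k-tiles 𝓔_{δ_1…δ_k} and 𝓔_{δ'_1…δ'_k} of 𝓔_n are disjoint. -/

import Mathlib

open Complex Filter Pointwise

/-- `piSum b d = ∑_{j≥1} d_j b^{-j}` (0-indexed: `d j` is the `(j+1)`-st digit). -/
noncomputable def piSum (b : ℂ) (d : ℕ → ℤ) : ℂ :=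
  ∑' j : ℕ, (d j : ℂ) * b ^ (-((j : ℤ) + 1))

/-- The `n`-th extended tile `𝓔_n`. -/
def extTile (n : ℕ) : Set ℂ :=
  {z | ∃ d : ℕ → ℤ, (∀ j, |d j| ≤ (n : ℤ) ^ 2) ∧
    z = piSum (-(n : ℂ) + Complex.I) d}

/-- The `k`-tile of a set `T` with digits `d_1, …, d_k` (0-indexed). -/
def kTile (b : ℂ) (T : Set ℂ) (k : ℕ) (d : Fin k → ℤ) : Set ℂ :=
  {z | ∃ t ∈ T, z = (∑ j : Fin k, (d j : ℂ) * b ^ (-((j : ℤ) + 1))) + b ^ (-(k : ℤ)) * t}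

/-- `Δ` is sparse: all distinct pairs differ by more than `2` when `n ≥ 5`,
and by more than `3` when `n ∈ {2, 3, 4}`. -/
def Sparse (n : ℕ) (Δ : Set ℤ) : Prop :=
  ∀ δ ∈ Δ, ∀ δ' ∈ Δ, δ ≠ δ' →
    (5 ≤ n → 2 < |δ - δ'|) ∧ (n = 2 ∨ n = 3 ∨ n = 4 → 3 < |δ - δ'|)

/-! If a point lies in two distinct `k`-tiles, subtracting its two expansions gives a vanishing
series `∑ c_j b^{-(j+1)}` with integer coefficients `|c_j| ≤ 2n²`, whose first nonzero coefficient
is a difference of two distinct elements of `Δ`, hence has absolute value at least `3` (at least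
`4` for `n ≤ 4`). After shifting, `c_0 = -∑_{j≥1} c_j β^j` with `β = b⁻¹`; multiplying by some
`w ∈ ℂ` and taking real parts gives `|c_0| |re w| ≤ 2n² ∑_j |re (w β^(j+1))|`.
Because `|im β^j| ≤ j |β|^(j-1) |im β|`, the choice `w = -i b` yields `|c_0| ≤ 2n² / (|b| - 1)²`,
which is small enough for `n ≥ 3`, and `w = i b²` yields `|c_0| ≤ n (1 + 1 / (|b| - 1)²)`,
which is small enough for `n = 2`. -/

lemma ne_zero_of_one_lt_norm {𝕜 : Type*} [NormedDivisionRing 𝕜] {b : 𝕜} (hb : 1 < ‖b‖) :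
    b ≠ 0 :=
  norm_pos_iff.mp (one_pos.trans hb)

lemma norm_inv_lt_one_of_one_lt_norm {𝕜 : Type*} [NormedDivisionRing 𝕜] {b : 𝕜}
    (hb : 1 < ‖b‖) : ‖b⁻¹‖ < 1 :=
  norm_inv b ▸ inv_lt_one_of_one_lt₀ hb

lemma abs_mul_abs_le_of_tsum_mul_eq_zero {c x : ℕ → ℝ} {M : ℝ} (hc : ∀ j, |c j| ≤ M)
    (hx : Summable fun j => |x j|) (h : ∑' j, c j * x j = 0) :
    |c 0| * |x 0| ≤ M * ∑' j, |x (j + 1)| := by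
  have hcx_le : ∀ j, |c j * x j| ≤ M * |x j| := fun j => by
    rw [abs_mul]; exact mul_le_mul_of_nonneg_right (hc j) (abs_nonneg _)
  have hcx : Summable fun j => |c j * x j| :=
    .of_nonneg_of_le (fun _ => abs_nonneg _) hcx_le (hx.mul_left M)
  have hcx1 : Summable fun j => |c (j + 1) * x (j + 1)| := hcx.comp_injective (add_left_injective 1)
  rw [hcx.of_abs.tsum_eq_zero_add, add_eq_zero_iff_eq_neg] at h
  calc |c 0| * |x 0| = |∑' j, c (j + 1) * x (j + 1)| := by rw [← abs_mul, h, abs_neg]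
    _ ≤ ∑' j, |c (j + 1) * x (j + 1)| := by
      have hnorm := norm_tsum_le_tsum_norm (f := fun j => c (j + 1) * x (j + 1))
        (by simpa only [Real.norm_eq_abs] using hcx1)
      simpa only [Real.norm_eq_abs] using hnorm
    _ ≤ ∑' j, M * |x (j + 1)| :=
      hcx1.tsum_le_tsum (fun j => hcx_le (j + 1))
        ((hx.comp_injective (add_left_injective 1)).mul_left M)
    _ = M * ∑' j, |x (j + 1)| := tsum_mul_left

lemma abs_im_pow_succ_le (z : ℂ) (j : ℕ) : |(z ^ (j + 1)).im| ≤ (j + 1) * ‖z‖ ^ j * |z.im| := by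
  induction j with
  | zero => simp
  | succ j ih =>
    rw [pow_succ, Complex.mul_im]
    calc |(z ^ (j + 1)).re * z.im + (z ^ (j + 1)).im * z.re|
        ≤ ‖z‖ ^ (j + 1) * |z.im| + (j + 1) * ‖z‖ ^ j * |z.im| * ‖z‖ := by
          refine (abs_add_le _ _).trans (add_le_add ?_ ?_) <;> rw [abs_mul]
          · gcongr
            exact (Complex.abs_re_le_norm _).trans (norm_pow z _).le
          · gcongr
            exact Complex.abs_re_le_norm z
      _ = (↑(j + 1) + 1) * ‖z‖ ^ (j + 1) * |z.im| := by push_cast; ring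

lemma summable_abs_im_pow {z : ℂ} (hz : ‖z‖ < 1) : Summable fun j => |(z ^ j).im| :=
  .of_nonneg_of_le (fun _ => abs_nonneg _)
    (fun j => (Complex.abs_im_le_norm _).trans (norm_pow z j).le)
    (summable_geometric_of_lt_one (norm_nonneg z) hz)

lemma tsum_abs_im_pow_le {z : ℂ} (hz : ‖z‖ < 1) :
    ∑' j, |(z ^ j).im| ≤ |z.im| / (1 - ‖z‖) ^ 2 := by
  have hgeom : HasSum (fun j : ℕ => ((j : ℝ) + 1) * ‖z‖ ^ j * |z.im|)
      (|z.im| / (1 - ‖z‖) ^ 2) := by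
    have h := (hasSum_choose_mul_geometric_of_norm_lt_one 1 (r := ‖z‖)
      (by rwa [norm_norm])).mul_right |z.im|
    simp only [Nat.choose_one_right, Nat.cast_add, Nat.cast_one] at h
    rw [show |z.im| / (1 - ‖z‖) ^ 2 = 1 / (1 - ‖z‖) ^ (1 + 1) * |z.im| by ring]
    exact h
  have hs := summable_abs_im_pow hz
  rw [hs.tsum_eq_zero_add, pow_zero, Complex.one_im, abs_zero, zero_add]
  exact (hs.comp_injective (add_left_injective 1)).tsum_le_of_sum_le fun s =>
    (Finset.sum_le_sum fun j _ => abs_im_pow_succ_le z j).trans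
      (sum_le_hasSum s (fun _ _ => by positivity) hgeom)

section PowerSeries

variable {β b : ℂ} {c : ℕ → ℤ} {M : ℤ}

lemma summable_intCast_mul_pow (hβ : ‖β‖ < 1) (hc : ∀ j, |c j| ≤ M) :
    Summable fun j => (c j : ℂ) * β ^ j := by
  refine .of_norm_bounded ((summable_geometric_of_lt_one (norm_nonneg β) hβ).mul_left (M : ℝ))
    fun j => ?_
  rw [norm_mul, norm_pow, Complex.norm_intCast]
  gcongr
  exact_mod_cast hc j

lemma abs_mul_abs_re_le_of_tsum_eq_zero (hβ : ‖β‖ < 1) (hc : ∀ j, |c j| ≤ M)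
    (h : ∑' j, (c j : ℂ) * β ^ j = 0) (w : ℂ) :
    |(c 0 : ℝ)| * |w.re| ≤ M * ∑' j, |(w * β ^ (j + 1)).re| := by
  have hx : Summable fun j => |(w * β ^ j).re| :=
    .of_nonneg_of_le (fun _ => abs_nonneg _)
      (fun j => (Complex.abs_re_le_norm _).trans (by rw [norm_mul, norm_pow]))
      ((summable_geometric_of_lt_one (norm_nonneg β) hβ).mul_left ‖w‖)
  have hcx : ∑' j, (c j : ℝ) * (w * β ^ j).re = 0 := by
    calc ∑' j, (c j : ℝ) * (w * β ^ j).re = (∑' j, w * ((c j : ℂ) * β ^ j)).re := by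
          rw [Complex.re_tsum ((summable_intCast_mul_pow hβ hc).mul_left w)]
          congr 1 with j
          rw [mul_left_comm, ← Complex.ofReal_intCast, Complex.re_ofReal_mul]
      _ = 0 := by rw [tsum_mul_left, h, mul_zero, Complex.zero_re]
  simpa using abs_mul_abs_le_of_tsum_mul_eq_zero (c := fun j => (c j : ℝ))
    (fun j => by exact_mod_cast hc j) hx hcx

lemma tsum_abs_im_inv_pow_le (hb : 1 < ‖b‖) :
    ∑' j, |((b⁻¹) ^ j).im| ≤ |b.im| / (‖b‖ - 1) ^ 2 := by
  refine (tsum_abs_im_pow_le (norm_inv_lt_one_of_one_lt_norm hb)).trans_eq ?_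
  rw [Complex.inv_im, norm_inv, ← Complex.sq_norm, abs_div, abs_neg, abs_of_nonneg (sq_nonneg ‖b‖)]
  have : ‖b‖ - 1 ≠ 0 := by linarith
  field_simp

lemma abs_mul_abs_im_le_of_tsum_eq_zero (hb : 1 < ‖b‖) (hc : ∀ j, |c j| ≤ M)
    (h : ∑' j, (c j : ℂ) * b⁻¹ ^ j = 0) :
    |(c 0 : ℝ)| * |b.im| ≤ M * (|b.im| / (‖b‖ - 1) ^ 2) := by
  have hM : (0 : ℝ) ≤ M := by exact_mod_cast (abs_nonneg _).trans (hc 0)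
  have key := abs_mul_abs_re_le_of_tsum_eq_zero (norm_inv_lt_one_of_one_lt_norm hb) hc h (-I * b)
  have hterm : ∀ j, (-I * b * b⁻¹ ^ (j + 1)).re = (b⁻¹ ^ j).im := fun j => by
    rw [pow_succ', ← mul_assoc, mul_assoc (-I), mul_inv_cancel₀ (ne_zero_of_one_lt_norm hb),
      mul_one]
    simp
  simp only [hterm] at key
  simp only [neg_mul, Complex.neg_re, Complex.I_mul_re, neg_neg] at key
  exact key.trans (by gcongr; exact tsum_abs_im_inv_pow_le hb)

lemma abs_mul_abs_im_sq_le_of_tsum_eq_zero (hb : 1 < ‖b‖) (hc : ∀ j, |c j| ≤ M)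
    (h : ∑' j, (c j : ℂ) * b⁻¹ ^ j = 0) :
    |(c 0 : ℝ)| * |(b ^ 2).im| ≤ M * (|b.im| + |b.im| / (‖b‖ - 1) ^ 2) := by
  have hb0 := ne_zero_of_one_lt_norm hb
  have hβ := norm_inv_lt_one_of_one_lt_norm hb
  have hM : (0 : ℝ) ≤ M := by exact_mod_cast (abs_nonneg _).trans (hc 0)
  have key := abs_mul_abs_re_le_of_tsum_eq_zero hβ hc h (I * b ^ 2)
  have hterm : ∀ j, (I * b ^ 2 * b⁻¹ ^ (j + 1)).re = -(b * b⁻¹ ^ j).im := fun j => by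
    rw [show I * b ^ 2 * b⁻¹ ^ (j + 1) = I * (b * b⁻¹ ^ j) * (b * b⁻¹) by ring,
      mul_inv_cancel₀ hb0, mul_one, Complex.I_mul_re]
  have hshift : ∀ j, b * b⁻¹ ^ (j + 1) = b⁻¹ ^ j := fun j => by
    rw [pow_succ', ← mul_assoc, mul_inv_cancel₀ hb0, one_mul]
  have hs : Summable fun j => |(b * b⁻¹ ^ j).im| :=
    (summable_nat_add_iff 1).mp (by simpa only [hshift] using summable_abs_im_pow hβ)
  simp only [hterm, abs_neg] at key
  rw [hs.tsum_eq_zero_add] at key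
  simp only [pow_zero, mul_one, hshift, Complex.I_mul_re, abs_neg] at key
  exact key.trans (by gcongr; exact tsum_abs_im_inv_pow_le hb)

end PowerSeries

lemma zpow_neg_natCast_add_one (b : ℂ) (j : ℕ) : b ^ (-((j : ℤ) + 1)) = b⁻¹ ^ (j + 1) := by
  rw [← Nat.cast_succ, zpow_neg, zpow_natCast, inv_pow]

lemma piSum_eq_inv_mul_tsum (b : ℂ) (c : ℕ → ℤ) :
    piSum b c = b⁻¹ * ∑' j, (c j : ℂ) * b⁻¹ ^ j := by
  rw [piSum, ← tsum_mul_left]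
  congr 1 with j
  rw [zpow_neg_natCast_add_one, pow_succ']
  ring

lemma norm_neg_natCast_add_I_sq (n : ℕ) : ‖-(n : ℂ) + I‖ ^ 2 = n ^ 2 + 1 := by
  rw [Complex.sq_norm, Complex.normSq_apply]
  simp
  ring

lemma one_lt_norm_neg_natCast_add_I {n : ℕ} (hn : 1 ≤ n) : 1 < ‖-(n : ℂ) + I‖ := by
  have hn' : (1 : ℝ) ≤ n := by exact_mod_cast hn
  have := norm_neg_natCast_add_I_sq n
  nlinarith [norm_nonneg (-(n : ℂ) + I)]

lemma two_mul_sq_lt_three_mul_norm_sub_one_sq {n : ℕ} (hn : 5 ≤ n) :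
    2 * (n : ℝ) ^ 2 < 3 * (‖-(n : ℂ) + I‖ - 1) ^ 2 := by
  have hs := norm_neg_natCast_add_I_sq n
  have : (25 : ℝ) ≤ n ^ 2 := by exact_mod_cast Nat.pow_le_pow_left hn 2
  have : 6 * ‖-(n : ℂ) + I‖ < n ^ 2 + 6 :=
    lt_of_pow_lt_pow_left₀ 2 (by positivity) (by rw [mul_pow, hs]; nlinarith)
  nlinarith

lemma two_mul_sq_lt_four_mul_norm_sub_one_sq {n : ℕ} (hn : 3 ≤ n) :
    2 * (n : ℝ) ^ 2 < 4 * (‖-(n : ℂ) + I‖ - 1) ^ 2 := by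
  have hs := norm_neg_natCast_add_I_sq n
  have : (9 : ℝ) ≤ n ^ 2 := by exact_mod_cast Nat.pow_le_pow_left hn 2
  have : 4 * ‖-(n : ℂ) + I‖ < n ^ 2 + 4 :=
    lt_of_pow_lt_pow_left₀ 2 (by positivity) (by rw [mul_pow, hs]; nlinarith)
  nlinarith

section GaussianBase

variable {n : ℕ} {c : ℕ → ℤ}

lemma abs_coeff_zero_lt_of_tsum_eq_zero (hn : 1 ≤ n) (hc : ∀ j, |c j| ≤ 2 * (n : ℤ) ^ 2)
    (h : ∑' j, (c j : ℂ) * (-(n : ℂ) + I)⁻¹ ^ j = 0) {A : ℝ}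
    (hA : 2 * (n : ℝ) ^ 2 < A * (‖-(n : ℂ) + I‖ - 1) ^ 2) : |(c 0 : ℝ)| < A := by
  have hb := one_lt_norm_neg_natCast_add_I hn
  have key := abs_mul_abs_im_le_of_tsum_eq_zero hb hc h
  have hd : 0 < (‖-(n : ℂ) + I‖ - 1) ^ 2 := by nlinarith
  simp only [Complex.add_im, Complex.neg_im, Complex.natCast_im, Complex.I_im, neg_zero, zero_add,
    abs_one, mul_one, mul_one_div, le_div_iff₀ hd] at key
  push_cast at key
  exact lt_of_mul_lt_mul_right (key.trans_lt hA) hd.le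

lemma abs_coeff_zero_lt_four_of_tsum_eq_zero (hc : ∀ j, |c j| ≤ 2 * ((2 : ℕ) : ℤ) ^ 2)
    (h : ∑' j, (c j : ℂ) * (-((2 : ℕ) : ℂ) + I)⁻¹ ^ j = 0) : |(c 0 : ℝ)| < 4 := by
  have hb := one_lt_norm_neg_natCast_add_I (n := 2) (by norm_num)
  have hs : ‖-((2 : ℕ) : ℂ) + I‖ ^ 2 = 5 := by rw [norm_neg_natCast_add_I_sq]; norm_num
  have key := abs_mul_abs_im_sq_le_of_tsum_eq_zero hb hc h
  have htail : ((‖-((2 : ℕ) : ℂ) + I‖ - 1) ^ 2)⁻¹ < 1 := inv_lt_one_of_one_lt₀ (by nlinarith)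
  have him : (-((2 : ℕ) : ℂ) + I).im = 1 := by simp
  have him2 : ((-((2 : ℕ) : ℂ) + I) ^ 2).im = -4 := by simp [sq]; norm_num
  rw [him, him2] at key
  norm_num at key
  nlinarith

lemma piSum_ne_zero_of_abs_le (hn : 2 ≤ n) (hc : ∀ j, |c j| ≤ 2 * (n : ℤ) ^ 2)
    (h5 : 5 ≤ n → 2 < |c 0|) (h234 : n = 2 ∨ n = 3 ∨ n = 4 → 3 < |c 0|) :
    piSum (-(n : ℂ) + I) c ≠ 0 := by
  intro h0
  have h : ∑' j, (c j : ℂ) * (-(n : ℂ) + I)⁻¹ ^ j = 0 := by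
    rw [piSum_eq_inv_mul_tsum, mul_eq_zero] at h0
    exact h0.resolve_left (inv_ne_zero (ne_zero_of_one_lt_norm
      (one_lt_norm_neg_natCast_add_I (by omega))))
  have hlt : ∀ A : ℤ, |(c 0 : ℝ)| < A → |c 0| < A := fun A hA => by exact_mod_cast hA
  rcases (by omega : n = 2 ∨ 3 ≤ n ∧ n ≤ 4 ∨ 5 ≤ n) with rfl | ⟨h3, h4⟩ | h5'
  · have := abs_coeff_zero_lt_four_of_tsum_eq_zero hc h
    linarith [h234 (Or.inl rfl), hlt 4 (by exact_mod_cast this)]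
  · have := abs_coeff_zero_lt_of_tsum_eq_zero (by omega) hc h
      (two_mul_sq_lt_four_mul_norm_sub_one_sq h3)
    linarith [h234 (by omega), hlt 4 (by exact_mod_cast this)]
  · have := abs_coeff_zero_lt_of_tsum_eq_zero (by omega) hc h
      (two_mul_sq_lt_three_mul_norm_sub_one_sq h5')
    linarith [h5 h5', hlt 3 (by exact_mod_cast this)]

end GaussianBase

def prependDigits {k : ℕ} (δ : Fin k → ℤ) (d : ℕ → ℤ) (j : ℕ) : ℤ :=
  if h : j < k then δ ⟨j, h⟩ else d (j - k)

section Digits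

variable {k : ℕ} {b : ℂ} {c c' d : ℕ → ℤ} {M : ℤ}

@[simp] lemma prependDigits_of_lt (δ : Fin k → ℤ) (d : ℕ → ℤ) {j : ℕ} (hj : j < k) :
    prependDigits δ d j = δ ⟨j, hj⟩ :=
  dif_pos hj

@[simp] lemma prependDigits_add (δ : Fin k → ℤ) (d : ℕ → ℤ) (j : ℕ) :
    prependDigits δ d (j + k) = d j := by
  simp [prependDigits]

lemma abs_prependDigits_le {δ : Fin k → ℤ} (hδ : ∀ j, |δ j| ≤ M) (hd : ∀ j, |d j| ≤ M) (j : ℕ) :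
    |prependDigits δ d j| ≤ M := by
  unfold prependDigits
  split_ifs
  exacts [hδ _, hd _]

lemma summable_piSum (hb : 1 < ‖b‖) (hd : ∀ j, |d j| ≤ M) :
    Summable fun j => (d j : ℂ) * b ^ (-((j : ℤ) + 1)) := by
  have := (summable_intCast_mul_pow (norm_inv_lt_one_of_one_lt_norm hb) hd).mul_left b⁻¹
  simpa only [zpow_neg_natCast_add_one, pow_succ', mul_left_comm] using this

lemma piSum_prependDigits (hb : 1 < ‖b‖) (hd : ∀ j, |d j| ≤ M) (δ : Fin k → ℤ) :
    piSum b (prependDigits δ d) =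
      ∑ j : Fin k, (δ j : ℂ) * b ^ (-((j : ℤ) + 1)) + b ^ (-(k : ℤ)) * piSum b d := by
  set f : ℕ → ℂ := fun j => (prependDigits δ d j : ℂ) * b ^ (-((j : ℤ) + 1))
  have htail : ∀ j, f (j + k) = b ^ (-(k : ℤ)) * ((d j : ℂ) * b ^ (-((j : ℤ) + 1))) := fun j => by
    simp only [f, prependDigits_add, mul_left_comm _ (d j : ℂ),
      ← zpow_add₀ (ne_zero_of_one_lt_norm hb)]
    push_cast
    ring_nf
  have hf : Summable f :=
    (summable_nat_add_iff k).mp (by simpa only [htail] using (summable_piSum hb hd).mul_left _)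
  rw [piSum, ← hf.sum_add_tsum_nat_add k, ← Fin.sum_univ_eq_sum_range]
  simp only [htail, tsum_mul_left, f, prependDigits_of_lt, Fin.is_lt]
  rfl

lemma piSum_sub (hb : 1 < ‖b‖) (hc : ∀ j, |c j| ≤ M) (hc' : ∀ j, |c' j| ≤ M) :
    piSum b (c - c') = piSum b c - piSum b c' := by
  rw [piSum, piSum, piSum, ← (summable_piSum hb hc).tsum_sub (summable_piSum hb hc')]
  congr 1 with j
  push_cast [Pi.sub_apply]
  ring

lemma piSum_shift_eq_zero (hb : 1 < ‖b‖) (hc : ∀ j, |c j| ≤ M) (h : piSum b c = 0) {m : ℕ}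
    (hlow : ∀ j < m, c j = 0) : piSum b (fun j => c (j + m)) = 0 := by
  have hc_eq : c = prependDigits (0 : Fin m → ℤ) (fun j => c (j + m)) := by
    funext j
    by_cases hj : j < m
    · simp [hj, hlow]
    · simp [prependDigits, hj, Nat.sub_add_cancel (not_lt.mp hj)]
  rw [hc_eq, piSum_prependDigits hb (fun j => hc (j + m))] at h
  simpa [ne_zero_of_one_lt_norm hb] using h

end Digits

lemma piSum_ne_zero_of_lowest {n : ℕ} (hn : 2 ≤ n) {c : ℕ → ℤ}
    (hc : ∀ j, |c j| ≤ 2 * (n : ℤ) ^ 2) {m : ℕ} (hlow : ∀ j < m, c j = 0)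
    (h5 : 5 ≤ n → 2 < |c m|) (h234 : n = 2 ∨ n = 3 ∨ n = 4 → 3 < |c m|) :
    piSum (-(n : ℂ) + I) c ≠ 0 := fun h =>
  piSum_ne_zero_of_abs_le hn (fun j => hc (j + m)) (by simpa using h5) (by simpa using h234)
    (piSum_shift_eq_zero (one_lt_norm_neg_natCast_add_I (by omega)) hc h hlow)

lemma abs_le_of_mem_sub {D : Set ℤ} {N : ℤ} (hD : D ⊆ Set.Icc 0 N) {x : ℤ} (hx : x ∈ D - D) :
    |x| ≤ N := by
  obtain ⟨a, ha, a', ha', rfl⟩ := hx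
  have := hD ha
  have := hD ha'
  simp only [Set.mem_Icc] at *
  rw [abs_le]
  constructor <;> linarith

theorem stmt_6_general (n : ℕ) (hn : 2 ≤ n) (D : Set ℤ)
    (hD : D ⊆ Set.Icc 0 ((n : ℤ) ^ 2))
    (hsparse : Sparse n (D - D))
    (k : ℕ) (δ δ' : Fin k → ℤ)
    (hδ : ∀ j, δ j ∈ D - D) (hδ' : ∀ j, δ' j ∈ D - D)
    (hne : ∃ j, δ j ≠ δ' j) :
    Disjoint (kTile (-(n : ℂ) + Complex.I) (extTile n) k δ)
      (kTile (-(n : ℂ) + Complex.I) (extTile n) k δ') := by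
  have hb := one_lt_norm_neg_natCast_add_I (n := n) (by omega)
  rw [Set.disjoint_left]
  rintro _ ⟨_, ⟨d, hd, rfl⟩, rfl⟩ ⟨_, ⟨d', hd', rfl⟩, hz⟩
  rw [← piSum_prependDigits hb hd, ← piSum_prependDigits hb hd'] at hz
  have he := abs_prependDigits_le (fun j => abs_le_of_mem_sub hD (hδ j)) hd
  have he' := abs_prependDigits_le (fun j => abs_le_of_mem_sub hD (hδ' j)) hd'
  obtain ⟨i, hi, hmin⟩ := WellFounded.has_min wellFounded_lt {j | δ j ≠ δ' j} hne
  have hsp := hsparse _ (hδ i) _ (hδ' i) hi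
  refine piSum_ne_zero_of_lowest hn (c := prependDigits δ d - prependDigits δ' d') (m := i)
    (fun j => (abs_sub _ _).trans (by linarith [he j, he' j])) (fun j hj => ?_)
    (by simpa using hsp.1) (by simpa using hsp.2)
    (by rw [piSum_sub hb he he', hz, sub_self])
  have hjk : j < k := hj.trans i.is_lt
  have hδj : δ ⟨j, hjk⟩ = δ' ⟨j, hjk⟩ := by_contra fun h => hmin ⟨j, hjk⟩ h hj
  simp [hjk, hδj]

theorem stmt_6 (n : ℕ) (hn : 2 ≤ n) (D : Set ℤ)
    (hD : D ⊆ Set.Icc 0 ((n : ℤ) ^ 2))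
    (hsparse : Sparse n (D - D))
    (k : ℕ) (hk : 1 ≤ k) (δ δ' : Fin k → ℤ)
    (hδ : ∀ j, δ j ∈ D - D) (hδ' : ∀ j, δ' j ∈ D - D)
    (hne : ∃ j, δ j ≠ δ' j) :
    Disjoint (kTile (-(n : ℂ) + Complex.I) (extTile n) k δ)
      (kTile (-(n : ℂ) + Complex.I) (extTile n) k δ') :=
  stmt_6_general n hn D hD hsparse k δ δ' hδ hδ' hne
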